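/- With L f = −f'' + f − 2Q f, the function Q'/Q satisfies L(Q'/Q) = −(5/3) Q' + Q'/Q, and consequently (L(Q'/Q))' = −2Q + (5/3) Q². -/

import Mathlib

/-!
The logarithmic derivative `g = Q'/Q` satisfies `g' = (Q''Q - Q'²)/Q²`, and the soliton equation
`Q'' = Q - Q²` together with its first integral `Q'² = Q² - (2/3)Q³` collapses this to `g' = -Q/3`.
Hence `g'' = -Q'/3`, so `L g = Q'/3 + g - 2Q' = -(5/3)Q' + g`, and differentiating once more with
`Q'' = Q - Q²` gives `(L g)' = -(5/3)(Q - Q²) - Q/3 = -2Q + (5/3)Q²`.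
-/

noncomputable def Q (x : ℝ) : ℝ := (3/2) / (Real.cosh (x/2))^2

noncomputable def L (f : ℝ → ℝ) (x : ℝ) : ℝ :=
  -deriv (deriv f) x + f x - 2 * Q x * f x

open Real

theorem HasDerivAt.div_of_soliton {q q' : ℝ → ℝ} {x : ℝ} (hq : HasDerivAt q (q' x) x)
    (hq' : HasDerivAt q' (q x - q x ^ 2) x) (henergy : q' x ^ 2 + 2 / 3 * q x ^ 3 = q x ^ 2)
    (hx : q x ≠ 0) : HasDerivAt (fun y => q' y / q y) (-(1 / 3) * q x) x := by
  refine (hq'.div hq hx).congr_deriv ?_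
  field_simp
  linear_combination (-3) * henergy

noncomputable def Q' (x : ℝ) : ℝ := -(3 / 2) * sinh (x / 2) / cosh (x / 2) ^ 3

theorem Q_pos (x : ℝ) : 0 < Q x := by
  have := cosh_pos (x / 2)
  unfold Q
  positivity

theorem hasDerivAt_cosh_half (x : ℝ) :
    HasDerivAt (fun y => cosh (y / 2)) (sinh (x / 2) / 2) x := by
  simpa [div_eq_mul_inv] using ((hasDerivAt_id x).div_const 2).cosh

theorem hasDerivAt_sinh_half (x : ℝ) :
    HasDerivAt (fun y => sinh (y / 2)) (cosh (x / 2) / 2) x := by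
  simpa [div_eq_mul_inv] using ((hasDerivAt_id x).div_const 2).sinh

theorem hasDerivAt_Q (x : ℝ) : HasDerivAt Q (Q' x) x := by
  have hc := (cosh_pos (x / 2)).ne'
  refine ((hasDerivAt_const x (3 / 2 : ℝ)).div ((hasDerivAt_cosh_half x).fun_pow 2)
    (pow_ne_zero 2 hc)).congr_deriv ?_
  unfold Q'
  field_simp
  ring

theorem deriv_Q : deriv Q = Q' := funext fun x => (hasDerivAt_Q x).deriv

theorem hasDerivAt_Q' (x : ℝ) : HasDerivAt Q' (Q x - Q x ^ 2) x := by
  have hc := (cosh_pos (x / 2)).ne'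
  refine ((((hasDerivAt_sinh_half x).const_mul (-(3 / 2))).div ((hasDerivAt_cosh_half x).fun_pow 3)
    (pow_ne_zero 3 hc))).congr_deriv ?_
  unfold Q
  field_simp
  linear_combination 3 * cosh (x / 2) ^ 2 * sinh_sq (x / 2)

theorem Q'_sq_add (x : ℝ) : Q' x ^ 2 + 2 / 3 * Q x ^ 3 = Q x ^ 2 := by
  have hc := (cosh_pos (x / 2)).ne'
  unfold Q Q'
  field_simp
  linear_combination sinh_sq (x / 2)

theorem hasDerivAt_Q'_div_Q (x : ℝ) :
    HasDerivAt (fun y => Q' y / Q y) (-(1 / 3) * Q x) x :=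
  (hasDerivAt_Q x).div_of_soliton (hasDerivAt_Q' x) (Q'_sq_add x) (Q_pos x).ne'

theorem L_Q'_div_Q (x : ℝ) : L (fun y => Q' y / Q y) x = -(5 / 3) * Q' x + Q' x / Q x := by
  have hdd : deriv (deriv fun y => Q' y / Q y) x = -(1 / 3) * Q' x := by
    rw [funext fun y => (hasDerivAt_Q'_div_Q y).deriv]
    exact ((hasDerivAt_Q x).const_mul _).deriv
  have hQ := (Q_pos x).ne'
  unfold L
  rw [hdd]
  field_simp
  ring

theorem L_of_Q'_over_Q :
    (∀ x : ℝ, L (fun y => deriv Q y / Q y) x = -(5/3) * deriv Q x + deriv Q x / Q x) ∧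
    (∀ x : ℝ, deriv (L (fun y => deriv Q y / Q y)) x = -2 * Q x + (5/3) * (Q x)^2) := by
  rw [deriv_Q]
  refine ⟨L_Q'_div_Q, fun x => ?_⟩
  rw [funext L_Q'_div_Q, (((hasDerivAt_Q' x).const_mul _).fun_add (hasDerivAt_Q'_div_Q x)).deriv]
  ring
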